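/- arXiv:1903.01658 — 2 statements merged into one kernel-verified Lean document; each statement's English description precedes it below -/
import Mathlib

section
/- Let α1, α2 ∈ (0,1] with γ := α1 + α2 satisfying 1 < γ ≤ 2, and βi := √(αi(1−αi)). Then the real symmetric 4×4 matrix T2 = (1/(2γ))·[[0, 0, 0, 0], [0, 1, β1β2γ/(α1α2), (γ−1)β1/α1], [0, β1β2γ/(α1α2), 1, (γ−1)β2/α2], [0, (γ−1)β1/α1, (γ−1)β2/α2, 2(γ−1)]] is positive semidefinite. -/
/-!
Only the lower-right `3 × 3` block matters. Writing `sᵢ = βᵢ / αᵢ`, so that `αᵢ sᵢ² = 1 - αᵢ`, its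
quadratic form is `u² + v² + 2γ s₁s₂ uv + 2(γ-1)(s₁u + s₂v)w + 2(γ-1)w²`. Completing the square
in `w` leaves half the binary form `a u² + 2b uv + c v²` with `a = 2 - (γ-1)s₁²`,
`b = (γ+1)s₁s₂`, `c = 2 - (γ-1)s₂²`; here `a > 0` and `α₁α₂(ac - b²) = 2γ(γ-1) > 0`.
Finally, a real positive semidefinite matrix is `Bᵀ B`, so it stays positive semidefinite over `ℂ`.
-/

open Matrix ComplexOrder
open scoped MatrixOrder

theorem Matrix.PosSemidef.map_ofReal {n 𝕜 : Type*} [Fintype n] [RCLike 𝕜] {A : Matrix n n ℝ}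
    (hA : A.PosSemidef) : (A.map ((↑) : ℝ → 𝕜)).PosSemidef := by
  classical
  obtain ⟨B, rfl⟩ := CStarAlgebra.nonneg_iff_eq_star_mul_self.mp hA.nonneg
  have h := posSemidef_conjTranspose_mul_self (B.map ((↑) : ℝ → 𝕜))
  rwa [← conjTranspose_map _ (fun _ => by simp), ← Matrix.map_mul] at h

theorem binary_quadratic_nonneg_of_sq_le_mul {a b c : ℝ} (ha : 0 < a) (hdisc : b ^ 2 ≤ a * c)
    (u v : ℝ) : 0 ≤ a * u ^ 2 + 2 * b * u * v + c * v ^ 2 := by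
  have hsq : a * (a * u ^ 2 + 2 * b * u * v + c * v ^ 2)
      = (a * u + b * v) ^ 2 + (a * c - b ^ 2) * v ^ 2 := by ring
  refine nonneg_of_mul_nonneg_right ?_ ha
  rw [hsq]
  exact add_nonneg (sq_nonneg _) (mul_nonneg (sub_nonneg.2 hdisc) (sq_nonneg v))

theorem T2_block_quadratic_nonneg {α₁ α₂ s₁ s₂ : ℝ} (hα₁ : 0 < α₁) (hα₂ : 0 < α₂)
    (hs₁ : α₁ * s₁ ^ 2 = 1 - α₁) (hs₂ : α₂ * s₂ ^ 2 = 1 - α₂) (hγ : 1 < α₁ + α₂) (u v w : ℝ) :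
    0 ≤ u ^ 2 + v ^ 2 + 2 * (α₁ + α₂) * s₁ * s₂ * u * v
      + 2 * (α₁ + α₂ - 1) * (s₁ * u + s₂ * v) * w + 2 * (α₁ + α₂ - 1) * w ^ 2 := by
  set γ := α₁ + α₂
  set a := 2 - (γ - 1) * s₁ ^ 2
  set b := (γ + 1) * s₁ * s₂
  set c := 2 - (γ - 1) * s₂ ^ 2
  have ha : 0 < a := by
    have : α₁ * a = α₁ ^ 2 + 1 - α₂ * (1 - α₁) := by linear_combination (1 - γ) * hs₁
    nlinarith
  have hdet : α₁ * α₂ * (a * c - b ^ 2) = 2 * γ * (γ - 1) := by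
    linear_combination (-2 * (γ - 1) * α₂ - 4 * γ * α₂ * s₂ ^ 2) * hs₁
      + (-2 * (γ - 1) * α₁ - 4 * γ * (1 - α₁)) * hs₂
  have hα : 0 < α₁ * α₂ := mul_pos hα₁ hα₂
  have hdisc : b ^ 2 ≤ a * c := by nlinarith
  have hsq : 2 * (u ^ 2 + v ^ 2 + 2 * γ * s₁ * s₂ * u * v + 2 * (γ - 1) * (s₁ * u + s₂ * v) * w
      + 2 * (γ - 1) * w ^ 2) = 4 * (γ - 1) * (w + (s₁ * u + s₂ * v) / 2) ^ 2
        + (a * u ^ 2 + 2 * b * u * v + c * v ^ 2) := by ring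
  nlinarith [binary_quadratic_nonneg_of_sq_le_mul ha hdisc u v,
    sq_nonneg (w + (s₁ * u + s₂ * v) / 2)]

theorem T2_real_posSemidef {α₁ α₂ s₁ s₂ : ℝ} (hα₁ : 0 < α₁) (hα₂ : 0 < α₂)
    (hs₁ : α₁ * s₁ ^ 2 = 1 - α₁) (hs₂ : α₂ * s₂ ^ 2 = 1 - α₂) (hγ : 1 < α₁ + α₂) :
    (!![0, 0, 0, 0;
        0, 1, (α₁ + α₂) * s₁ * s₂, (α₁ + α₂ - 1) * s₁;
        0, (α₁ + α₂) * s₁ * s₂, 1, (α₁ + α₂ - 1) * s₂;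
        0, (α₁ + α₂ - 1) * s₁, (α₁ + α₂ - 1) * s₂, 2 * (α₁ + α₂ - 1)]
      : Matrix (Fin 4) (Fin 4) ℝ).PosSemidef := by
  refine .of_dotProduct_mulVec_nonneg ?_ fun x => ?_
  · ext i j
    fin_cases i <;> fin_cases j <;> rfl
  · refine (T2_block_quadratic_nonneg hα₁ hα₂ hs₁ hs₂ hγ (x 1) (x 2) (x 3)).trans_eq ?_
    simp only [Fin.isValue, dotProduct, Pi.star_apply, star_trivial, mulVec, of_apply, cons_val',
      cons_val_fin_one, Fin.sum_univ_four, cons_val_zero, cons_val_one, cons_val, zero_mul,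
      add_zero, mul_zero, one_mul, zero_add]
    ring

theorem mul_sq_sqrt_mul_one_sub_div_self {α : ℝ} (hα : α ∈ Set.Ioc 0 1) :
    α * (√(α * (1 - α)) / α) ^ 2 = 1 - α := by
  obtain ⟨hα₀, hα₁⟩ := hα
  rw [div_pow, Real.sq_sqrt (mul_nonneg hα₀.le (sub_nonneg.2 hα₁))]
  field_simp

theorem T2_posSemidef_general (α1 α2 γ β1 β2 : ℝ)
    (hα1 : α1 ∈ Set.Ioc (0:ℝ) 1) (hα2 : α2 ∈ Set.Ioc (0:ℝ) 1)
    (hγ : γ = α1 + α2) (hγ1 : 1 < γ)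
    (hβ1 : β1 = Real.sqrt (α1 * (1 - α1))) (hβ2 : β2 = Real.sqrt (α2 * (1 - α2))) :
    (((1 / (2 * γ)) •
      !![0, 0, 0, 0;
         0, 1, β1 * β2 * γ / (α1 * α2), (γ - 1) * β1 / α1;
         0, β1 * β2 * γ / (α1 * α2), 1, (γ - 1) * β2 / α2;
         0, (γ - 1) * β1 / α1, (γ - 1) * β2 / α2, 2 * (γ - 1)]
      : Matrix (Fin 4) (Fin 4) ℝ).map Complex.ofReal).PosSemidef := by
  subst hγ
  have hs₁ : α1 * (β1 / α1) ^ 2 = 1 - α1 := hβ1 ▸ mul_sq_sqrt_mul_one_sub_div_self hα1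
  have hs₂ : α2 * (β2 / α2) ^ 2 = 1 - α2 := hβ2 ▸ mul_sq_sqrt_mul_one_sub_div_self hα2
  have hb : β1 * β2 * (α1 + α2) / (α1 * α2) = (α1 + α2) * (β1 / α1) * (β2 / α2) := by ring
  rw [hb, mul_div_assoc, mul_div_assoc]
  refine PosSemidef.map_ofReal (.smul ?_ (one_div_nonneg.2 (by linarith)))
  exact T2_real_posSemidef hα1.1 hα2.1 hs₁ hs₂ hγ1

/-- The matrix `T2` from the sufficiency proof is positive semidefinite. -/
theorem T2_posSemidef (α1 α2 γ β1 β2 : ℝ)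
    (hα1 : α1 ∈ Set.Ioc (0:ℝ) 1) (hα2 : α2 ∈ Set.Ioc (0:ℝ) 1)
    (hγ : γ = α1 + α2) (hγ1 : 1 < γ) (hγ2 : γ ≤ 2)
    (hβ1 : β1 = Real.sqrt (α1 * (1 - α1))) (hβ2 : β2 = Real.sqrt (α2 * (1 - α2))) :
    (((1 / (2 * γ)) •
      !![0, 0, 0, 0;
         0, 1, β1 * β2 * γ / (α1 * α2), (γ - 1) * β1 / α1;
         0, β1 * β2 * γ / (α1 * α2), 1, (γ - 1) * β2 / α2;
         0, (γ - 1) * β1 / α1, (γ - 1) * β2 / α2, 2 * (γ - 1)]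
      : Matrix (Fin 4) (Fin 4) ℝ).map Complex.ofReal).PosSemidef :=
  T2_posSemidef_general α1 α2 γ β1 β2 hα1 hα2 hγ hγ1 hβ1 hβ2
end

section
/- Let ρ1, ρ2 be states on ℂ^{dA} ⊗ ℂ^{dB} that are invariant under partial transpose, Γ(ρ1) = ρ1 and Γ(ρ2) = ρ2. Suppose S1, S1', S2, S2' are positive semidefinite matrices with (S1 + Γ(S1')) + (S2 + Γ(S2')) = 1 (identity) and Tr(ρ1·(S2 + Γ(S2'))) = Tr(ρ2·(S1 + Γ(S1'))) = 0. Then T1 := (S1 + S1')/2 and T2 := (S2 + S2')/2 are positive semidefinite, satisfy (T1 + Γ(T1)) + (T2 + Γ(T2)) = 1, and Tr(ρ1 T2) = Tr(ρ2 T1) = 0. -/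
open Matrix ComplexOrder

noncomputable section

abbrev Mat (dA dB : ℕ) := Matrix (Fin dA × Fin dB) (Fin dA × Fin dB) ℂ

/-- Partial transpose on the second factor. -/
def ptB {dA dB : ℕ} (X : Mat dA dB) : Mat dA dB :=
  Matrix.of fun p q => X (p.1, q.2) (q.1, p.2)

/-!
The partial transpose is an involution fixing `1`, and `Tr(X Γ(Y)) = Tr(Γ(X) Y)`, so a
Γ-invariant state `ρ` satisfies `Tr(ρ (S + Γ S')) = Tr(ρ S) + Tr(ρ S')`. Both summands are
traces of products of positive semidefinite matrices, hence nonnegative, so they vanish when the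
sum does; this kills `Tr(ρ (S + S'))`. Completeness of the symmetrized measurement is the
average of the given relation and its partial transpose.
-/

open scoped MatrixOrder in
theorem Matrix.PosSemidef.trace_mul_nonneg {𝕜 n : Type*} [RCLike 𝕜] [Fintype n] [DecidableEq n]
    {A B : Matrix n n 𝕜} (hA : A.PosSemidef) (hB : B.PosSemidef) : 0 ≤ (A * B).trace := by
  obtain ⟨C, rfl⟩ := CStarAlgebra.nonneg_iff_eq_star_mul_self.mp hA.nonneg
  rw [star_eq_conjTranspose, Matrix.mul_assoc, Matrix.trace_mul_comm]
  exact (hB.mul_mul_conjTranspose_same C).trace_nonneg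

section PartialTranspose

variable {dA dB : ℕ}

@[simp] lemma ptB_add (X Y : Mat dA dB) : ptB (X + Y) = ptB X + ptB Y := rfl

@[simp] lemma ptB_smul (c : ℂ) (X : Mat dA dB) : ptB (c • X) = c • ptB X := rfl

@[simp] lemma ptB_ptB (X : Mat dA dB) : ptB (ptB X) = X := rfl

@[simp] lemma ptB_one : ptB (1 : Mat dA dB) = 1 := by
  ext ⟨a, b⟩ ⟨a', b'⟩
  simp only [ptB, of_apply, one_apply, Prod.mk.injEq]
  by_cases ha : a = a' <;> by_cases hb : b = b' <;> simp [ha, hb, eq_comm]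

lemma trace_mul_ptB (X Y : Mat dA dB) : (X * ptB Y).trace = (ptB X * Y).trace := by
  simp only [trace, diag, mul_apply, ptB, of_apply]
  rw [← Finset.sum_product', ← Finset.sum_product']
  exact Finset.sum_nbij' (fun z => ((z.1.1, z.2.2), (z.2.1, z.1.2)))
    (fun z => ((z.1.1, z.2.2), (z.2.1, z.1.2)))
    (fun _ _ => Finset.mem_univ _) (fun _ _ => Finset.mem_univ _)
    (fun _ _ => rfl) (fun _ _ => rfl) (fun _ _ => rfl)

lemma trace_mul_ptB_of_ptB_eq {ρ : Mat dA dB} (hρ : ptB ρ = ρ) (X : Mat dA dB) :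
    (ρ * ptB X).trace = (ρ * X).trace := by
  rw [trace_mul_ptB, hρ]

lemma smul_add_add_ptB (c : ℂ) (S S' : Mat dA dB) :
    c • (S + S') + ptB (c • (S + S')) = c • ((S + ptB S') + ptB (S + ptB S')) := by
  rw [ptB_smul, ← smul_add]
  simp only [ptB_add, ptB_ptB]
  abel_nf

lemma trace_mul_smul_add_eq_zero {ρ S S' : Mat dA dB} (hρ : ρ.PosSemidef) (hΓ : ptB ρ = ρ)
    (hS : S.PosSemidef) (hS' : S'.PosSemidef) (h : (ρ * (S + ptB S')).trace = 0) (c : ℂ) :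
    (ρ * (c • (S + S'))).trace = 0 := by
  rw [mul_add, trace_add, trace_mul_ptB_of_ptB_eq hΓ] at h
  obtain ⟨hS0, hS'0⟩ :=
    (add_eq_zero_iff_of_nonneg (hρ.trace_mul_nonneg hS) (hρ.trace_mul_nonneg hS')).mp h
  rw [mul_smul_comm, trace_smul, mul_add, trace_add, hS0, hS'0, add_zero, smul_zero]

end PartialTranspose

theorem symmetrized_measurement_general (dA dB : ℕ)
    (ρ1 ρ2 S1 S1' S2 S2' : Mat dA dB)
    (hρ1 : ρ1.PosSemidef)
    (hρ2 : ρ2.PosSemidef)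
    (hΓ1 : ptB ρ1 = ρ1) (hΓ2 : ptB ρ2 = ρ2)
    (hS1 : S1.PosSemidef) (hS1' : S1'.PosSemidef)
    (hS2 : S2.PosSemidef) (hS2' : S2'.PosSemidef)
    (hsum : (S1 + ptB S1') + (S2 + ptB S2') = 1)
    (h1 : (ρ1 * (S2 + ptB S2')).trace = 0)
    (h2 : (ρ2 * (S1 + ptB S1')).trace = 0) :
    ((1/2 : ℂ) • (S1 + S1')).PosSemidef ∧ ((1/2 : ℂ) • (S2 + S2')).PosSemidef ∧
    (((1/2 : ℂ) • (S1 + S1') + ptB ((1/2 : ℂ) • (S1 + S1'))) +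
      ((1/2 : ℂ) • (S2 + S2') + ptB ((1/2 : ℂ) • (S2 + S2')))) = 1 ∧
    (ρ1 * ((1/2 : ℂ) • (S2 + S2'))).trace = 0 ∧
    (ρ2 * ((1/2 : ℂ) • (S1 + S1'))).trace = 0 := by
  refine ⟨(hS1.add hS1').smul (by positivity), (hS2.add hS2').smul (by positivity), ?_,
    trace_mul_smul_add_eq_zero hρ1 hΓ1 hS2 hS2' h1 _,
    trace_mul_smul_add_eq_zero hρ2 hΓ2 hS1 hS1' h2 _⟩
  rw [smul_add_add_ptB, smul_add_add_ptB, ← smul_add, add_add_add_comm, ← ptB_add, hsum, ptB_one,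
    ← two_smul ℂ, smul_smul]
  norm_num

/-- Symmetrization of a perfectly discriminating SEP measurement for partial-transpose
invariant states. -/
theorem symmetrized_measurement (dA dB : ℕ) (hdA : 0 < dA) (hdB : 0 < dB)
    (ρ1 ρ2 S1 S1' S2 S2' : Mat dA dB)
    (hρ1 : ρ1.PosSemidef) (hρ1tr : ρ1.trace = 1)
    (hρ2 : ρ2.PosSemidef) (hρ2tr : ρ2.trace = 1)
    (hΓ1 : ptB ρ1 = ρ1) (hΓ2 : ptB ρ2 = ρ2)
    (hS1 : S1.PosSemidef) (hS1' : S1'.PosSemidef)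
    (hS2 : S2.PosSemidef) (hS2' : S2'.PosSemidef)
    (hsum : (S1 + ptB S1') + (S2 + ptB S2') = 1)
    (h1 : (ρ1 * (S2 + ptB S2')).trace = 0)
    (h2 : (ρ2 * (S1 + ptB S1')).trace = 0) :
    ((1/2 : ℂ) • (S1 + S1')).PosSemidef ∧ ((1/2 : ℂ) • (S2 + S2')).PosSemidef ∧
    (((1/2 : ℂ) • (S1 + S1') + ptB ((1/2 : ℂ) • (S1 + S1'))) +
      ((1/2 : ℂ) • (S2 + S2') + ptB ((1/2 : ℂ) • (S2 + S2')))) = 1 ∧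
    (ρ1 * ((1/2 : ℂ) • (S2 + S2'))).trace = 0 ∧
    (ρ2 * ((1/2 : ℂ) • (S1 + S1'))).trace = 0 :=
  symmetrized_measurement_general dA dB ρ1 ρ2 S1 S1' S2 S2' hρ1 hρ2 hΓ1 hΓ2 hS1 hS1' hS2 hS2' hsum
    h1 h2
end
end
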